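/- Let X be a Tychonoff (completely regular Hausdorff) topological space with at least two points. Then X has exactly two points if and only if there exists an ideal I ∈ A(X) such that for every J ∈ A(X) with J ≠ I one has I·J = {0} (i.e., the annihilating-ideal graph of C(X) is a star graph). -/

import Mathlib

/-!
Since `C(X)` is reduced, a centre `I` of the star has `I * J ≠ 0` for every nonzero ideal `J`
comparable with it. Every nonzero ideal below `I` lies in `A(X)`, so `I` is an atom of the ideal
lattice, and no member of `A(X)` lies strictly above `I`. By complete regularity the functions of
an atom are all supported at one point `q`. If `X \ {q}` contained two points `p ≠ r`, functions
`w` and `h` with disjoint supports, vanishing at `q`, with `w p ≠ 0` and `h r ≠ 0`, would make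
`I + (h)` a member of `A(X)` (annihilated by `w`) strictly above `I`.

Conversely, for `X = {p, q}` the ideal of functions vanishing at `q` is an atom whose annihilator
contains the functions vanishing at `p`, and every member of `A(X)` lies in one of these two ideals.
-/

open Set

/-- `annIdeal I` is `Ann(I)`, the annihilator of the ideal `I` of `C(X, ℝ)`. -/
def annIdeal {X : Type*} [TopologicalSpace X] (I : Ideal C(X, ℝ)) : Ideal C(X, ℝ) where
  carrier := {g | ∀ f ∈ I, g * f = 0}
  add_mem' := by
    intro a b ha hb f hf
    rw [add_mul, ha f hf, hb f hf, add_zero]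
  zero_mem' := fun f _ => zero_mul f
  smul_mem' := by
    intro c g hg f hf
    rw [smul_eq_mul, mul_assoc, hg f hf, mul_zero]

/-- `annSet X` is `A(X)`: the set of nonzero ideals of `C(X, ℝ)` with nonzero annihilator. -/
def annSet (X : Type*) [TopologicalSpace X] : Set (Ideal C(X, ℝ)) :=
  {I | I ≠ ⊥ ∧ annIdeal I ≠ ⊥}

open ContinuousMap

instance ContinuousMap.instIsReduced {X R : Type*} [TopologicalSpace X] [TopologicalSpace R]
    [Semiring R] [IsTopologicalSemiring R] [IsReduced R] : IsReduced C(X, R) :=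
  isReduced_of_injective coeFnRingHom DFunLike.coe_injective

theorem Ideal.eq_bot_of_le_of_mul_eq_bot {R : Type*} [CommSemiring R] [IsReduced R]
    {I J : Ideal R} (hJI : J ≤ I) (h : I * J = ⊥) : J = ⊥ :=
  IsReduced.eq_zero J
    ⟨2, le_bot_iff.1 <| (pow_two J).trans_le ((Ideal.mul_mono_left hJI).trans h.le)⟩

section

variable {X : Type*} [TopologicalSpace X]

theorem annIdeal_eq_annihilator (I : Ideal C(X, ℝ)) : annIdeal I = Submodule.annihilator I := by
  ext g
  simp [annIdeal, Submodule.mem_annihilator]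

theorem mem_annSet_iff {I : Ideal C(X, ℝ)} :
    I ∈ annSet X ↔ I ≠ ⊥ ∧ Submodule.annihilator I ≠ ⊥ := by
  rw [← annIdeal_eq_annihilator]
  rfl

theorem idealOfSet_compl_le_annihilator {R : Type*} [TopologicalSpace R] [CommSemiring R]
    [IsTopologicalSemiring R] (s : Set X) :
    idealOfSet R sᶜ ≤ (idealOfSet R s).annihilator := by
  intro g hg
  rw [Submodule.mem_annihilator]
  intro f hf
  ext x
  by_cases hx : x ∈ s
  · simp [mem_idealOfSet.1 hg (not_not.2 hx)]
  · simp [mem_idealOfSet.1 hf hx]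

theorem exists_le_idealOfSet_of_annihilator_ne_bot {R : Type*} [TopologicalSpace R]
    [CommSemiring R] [IsTopologicalSemiring R] [NoZeroDivisors R] {J : Ideal C(X, R)}
    (h : J.annihilator ≠ ⊥) : ∃ x, J ≤ idealOfSet R {x}ᶜ := by
  obtain ⟨g, hg, hg0⟩ := Submodule.exists_mem_ne_zero_of_ne_bot h
  obtain ⟨x, hx⟩ := DFunLike.ne_iff.1 hg0
  refine ⟨x, fun f hf => ?_⟩
  rw [mem_idealOfSet_compl_singleton]
  have hgf : g x * f x = 0 := by simpa using congr($(Submodule.mem_annihilator.1 hg f hf) x)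
  exact (mul_eq_zero.1 hgf).resolve_left hx

def IsStarCenter (I : Ideal C(X, ℝ)) : Prop :=
  I ∈ annSet X ∧ ∀ J ∈ annSet X, J ≠ I → I * J = ⊥

namespace IsStarCenter

variable {I J : Ideal C(X, ℝ)}

theorem eq_of_le (hI : IsStarCenter I) (hJ : J ∈ annSet X) (hIJ : I ≤ J) : J = I := by
  by_contra hne
  exact hI.1.1 (Ideal.eq_bot_of_le_of_mul_eq_bot hIJ (by rw [mul_comm]; exact hI.2 J hJ hne))

theorem isAtom (hI : IsStarCenter I) : IsAtom I := by
  refine isAtom_iff_le_of_ge.2 ⟨hI.1.1, fun J hJ hJI => ?_⟩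
  have hJA : J ∈ annSet X := mem_annSet_iff.2
    ⟨hJ, ne_bot_of_le_ne_bot (mem_annSet_iff.1 hI.1).2 (Submodule.annihilator_mono hJI)⟩
  by_contra hIJ
  exact hJ (Ideal.eq_bot_of_le_of_mul_eq_bot hJI (hI.2 J hJA fun h => hIJ h.ge))

end IsStarCenter

theorem exists_continuousMap_eq_one_eqOn_zero [CompletelyRegularSpace X] {x : X} {K : Set X}
    (hK : IsClosed K) (hx : x ∉ K) : ∃ u : C(X, ℝ), u x = 1 ∧ EqOn u 0 K := by
  obtain ⟨f, hf, hfx, hfK⟩ := CompletelyRegularSpace.completely_regular x K hK hx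
  exact ⟨⟨fun y => 1 - f y, by fun_prop⟩, by simp [hfx], fun y hy => by simp [hfK hy]⟩

theorem exists_mul_eq_zero_of_notMem [T35Space X] {x y : X} {K : Set X} (hK : IsClosed K)
    (hx : x ∉ K) (hy : y ∉ K) (hxy : x ≠ y) :
    ∃ w h : C(X, ℝ), w x ≠ 0 ∧ h y ≠ 0 ∧ EqOn w 0 K ∧ EqOn h 0 K ∧ w * h = 0 := by
  have hxK : x ∉ K ∪ {y} := by simp [hx, hxy]
  have hyK : y ∉ K ∪ {x} := by simp [hy, hxy.symm]
  obtain ⟨u, hux, huK⟩ := exists_continuousMap_eq_one_eqOn_zero (hK.union isClosed_singleton) hxK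
  obtain ⟨v, hvy, hvK⟩ := exists_continuousMap_eq_one_eqOn_zero (hK.union isClosed_singleton) hyK
  -- `w` and `h` are the positive and negative parts of `u - v`, which is `1` at `x`, `-1` at `y`
  -- and `0` on `K`.
  refine ⟨(u - v) ⊔ 0, (v - u) ⊔ 0, ?_, ?_, fun z hz => ?_, fun z hz => ?_, ?_⟩
  · simp [hux, hvK (Or.inr rfl)]
  · simp [hvy, huK (Or.inr rfl)]
  · simp [huK (Or.inl hz), hvK (Or.inl hz)]
  · simp [huK (Or.inl hz), hvK (Or.inl hz)]
  · ext z
    rcases le_total (u z) (v z) with h | h <;> simp [h]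

theorem IsAtom.le_idealOfSet_singleton [T35Space X] {I : Ideal C(X, ℝ)} (hI : IsAtom I)
    {f : C(X, ℝ)} (hf : f ∈ I) {q : X} (hq : f q ≠ 0) : I ≤ idealOfSet ℝ {q} := by
  intro a ha
  rw [mem_idealOfSet]
  intro x hx
  obtain ⟨u, huq, hux⟩ := exists_continuousMap_eq_one_eqOn_zero isClosed_singleton (Ne.symm hx)
  have hfu_le : Ideal.span {f * u} ≤ I :=
    (Ideal.span_singleton_le_iff_mem _).2 (I.mul_mem_right u hf)
  have hfu : Ideal.span {f * u} = I := by
    refine (hI.le_iff.1 hfu_le).resolve_left ?_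
    rw [Ideal.span_singleton_eq_bot]
    intro h
    simpa [huq, hq] using congr($h q)
  obtain ⟨c, rfl⟩ := Ideal.mem_span_singleton'.1 (hfu ▸ ha)
  simp [hux rfl]

theorem idealOfSet_compl_singleton_ne_bot [T35Space X] {p q : X} (hpq : p ≠ q) :
    idealOfSet ℝ {q}ᶜ ≠ ⊥ := by
  obtain ⟨u, hup, huq⟩ := exists_continuousMap_eq_one_eqOn_zero isClosed_singleton hpq
  refine (Submodule.ne_bot_iff _).2 ⟨u, by simpa using huq rfl, fun h => ?_⟩
  simp [h] at hup

theorem isAtom_idealOfSet_compl_singleton [T35Space X] {p q : X} (hpq : p ≠ q)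
    (hX : ∀ x, x = p ∨ x = q) : IsAtom (idealOfSet ℝ {q}ᶜ) := by
  refine isAtom_iff_le_of_ge.2 ⟨idealOfSet_compl_singleton_ne_bot hpq, fun J hJ hJq a ha => ?_⟩
  obtain ⟨j, hj, hj0⟩ := Submodule.exists_mem_ne_zero_of_ne_bot hJ
  have hjq : j q = 0 := (mem_idealOfSet_compl_singleton _ _).1 (hJq hj)
  have hjp : j p ≠ 0 := by
    obtain ⟨x, hx⟩ := DFunLike.ne_iff.1 hj0
    rcases hX x with rfl | rfl
    exacts [hx, absurd hjq hx]
  have ha_eq : a = const X (a p / j p) * j := by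
    ext x
    rcases hX x with rfl | rfl
    · simp [hjp]
    · simp [hjq, (mem_idealOfSet_compl_singleton _ _).1 ha]
  rw [ha_eq]
  exact J.mul_mem_left _ hj

theorem isStarCenter_idealOfSet_compl_singleton [T35Space X] {p q : X} (hpq : p ≠ q)
    (hX : ∀ x, x = p ∨ x = q) : IsStarCenter (idealOfSet ℝ {q}ᶜ) := by
  have hcompl : ({q}ᶜ : Set X) = {p} := by
    ext x
    rcases hX x with rfl | rfl <;> simp [hpq, hpq.symm]
  have hann : idealOfSet ℝ {p}ᶜ ≤ (idealOfSet ℝ {q}ᶜ).annihilator := by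
    rw [hcompl]
    exact idealOfSet_compl_le_annihilator _
  refine ⟨mem_annSet_iff.2 ⟨idealOfSet_compl_singleton_ne_bot hpq,
    ne_bot_of_le_ne_bot (idealOfSet_compl_singleton_ne_bot hpq.symm) hann⟩, fun J hJ hJq => ?_⟩
  obtain ⟨x, hx⟩ := exists_le_idealOfSet_of_annihilator_ne_bot (mem_annSet_iff.1 hJ).2
  rcases hX x with rfl | rfl
  · rw [mul_comm]
    exact Submodule.le_annihilator_iff.1 (hx.trans hann)
  · exact absurd (((isAtom_idealOfSet_compl_singleton hpq hX).le_iff.1 hx).resolve_left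
      (mem_annSet_iff.1 hJ).1) hJq

theorem IsStarCenter.eq_of_ne_of_ne [T35Space X] {I : Ideal C(X, ℝ)} (hI : IsStarCenter I)
    {q : X} (hIq : I ≤ idealOfSet ℝ {q}) {p r : X} (hp : p ≠ q) (hr : r ≠ q) : r = p := by
  by_contra hrp
  obtain ⟨w, h, hwp, hhr, hwq, -, hwh⟩ :=
    exists_mul_eq_zero_of_notMem isClosed_singleton hp hr (Ne.symm hrp)
  have hwI : w ∈ I.annihilator := Submodule.annihilator_mono hIq
    (idealOfSet_compl_le_annihilator _ ((mem_idealOfSet_compl_singleton _ _).2 (hwq rfl)))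
  have hJ : I ⊔ Ideal.span {h} ∈ annSet X := by
    refine mem_annSet_iff.2 ⟨ne_bot_of_le_ne_bot hI.1.1 le_sup_left,
      (Submodule.ne_bot_iff _).2 ⟨w, ?_, fun hw => hwp (by simp [hw])⟩⟩
    rw [Submodule.annihilator_sup, Submodule.mem_inf, Submodule.mem_annihilator_span_singleton]
    exact ⟨hwI, hwh⟩
  have hhI : h ∈ I :=
    hI.eq_of_le hJ le_sup_left ▸ Ideal.mem_sup_right (Ideal.mem_span_singleton_self h)
  exact hhr (mem_idealOfSet.1 (hIq hhI) hr)

end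

/-- A Tychonoff space `X` with at least two points has exactly two points iff the
annihilating-ideal graph of `C(X)` is a star graph, i.e. some vertex `I ∈ A(X)` is adjacent
to every other vertex. -/
theorem two_points_iff_star {X : Type*} [TopologicalSpace X] [T35Space X] [Nontrivial X] :
    (∃ p q : X, p ≠ q ∧ ∀ x : X, x = p ∨ x = q) ↔
      ∃ I ∈ annSet X, ∀ J ∈ annSet X, J ≠ I → I * J = ⊥ := by
  constructor
  · rintro ⟨p, q, hpq, hX⟩
    exact ⟨_, isStarCenter_idealOfSet_compl_singleton hpq hX⟩
  · rintro ⟨I, hI⟩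
    replace hI : IsStarCenter I := hI
    obtain ⟨f, hfI, hf0⟩ := Submodule.exists_mem_ne_zero_of_ne_bot hI.1.1
    obtain ⟨q, hq⟩ := DFunLike.ne_iff.1 hf0
    obtain ⟨p, hpq⟩ := exists_ne q
    have hIq := hI.isAtom.le_idealOfSet_singleton hfI hq
    exact ⟨p, q, hpq, fun r => or_iff_not_imp_right.2 fun hr => hI.eq_of_ne_of_ne hIq hpq hr⟩
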